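/- arXiv:0907.1316 — 9 statements merged into one kernel-verified Lean document; each statement's English description precedes it below -/
import Mathlib

section
/- Let g : [0,∞) → [0,∞) be a nonincreasing function. Then for all t > 0 and λ > 0: (1 − e^{−2t/λ}) · ∫₀^∞ e^{−2s/λ} g(s) ds ≤ ∫₀^t g(s) ds ≤ e^{2t/λ} · ∫₀^∞ e^{−2s/λ} g(s) ds. -/
open MeasureTheory Set Filter
open scoped ENNReal

/-!
Cut `(0, ∞)` into the intervals `(n t, (n + 1) t]`. On the `n`-th one the weight is at most
`e^{-c n t}`, and shifting by `n t` and using that `g` is nonincreasing bounds `g` there by `g` on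
`(0, t]`; so the `n`-th piece of the weighted integral is at most `e^{-c n t} ∫₀ᵗ g`, and summing
the geometric series gives the lower bound. The upper bound only uses `e^{c (t - s)} ≥ 1` on `(0, t]`.
-/

theorem setLIntegral_Ioc_comp_add_right (f : ℝ → ℝ≥0∞) (a b d : ℝ) :
    ∫⁻ x in Ioc a b, f (x + d) = ∫⁻ x in Ioc (a + d) (b + d), f x := by
  rw [(measurePreserving_add_right volume d).setLIntegral_comp_emb
    (measurableEmbedding_addRight d), image_add_const_Ioc]

theorem monotone_natCast_mul {t : ℝ} (ht : 0 ≤ t) : Monotone fun n : ℕ => (n : ℝ) * t :=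
  fun _ _ h => mul_le_mul_of_nonneg_right (Nat.cast_le.2 h) ht

theorem iUnion_Ioc_nat_mul {t : ℝ} (ht : 0 < t) :
    ⋃ n : ℕ, Ioc (n * t) ((n + 1) * t) = Ioi 0 := by
  simpa using iUnion_Ioc_map_succ_eq_Ioi (fun _ => monotone_natCast_mul ht.le bot_le)
    (not_bddAbove_of_tendsto_atTop (tendsto_natCast_atTop_atTop.atTop_mul_const ht))

theorem pairwise_disjoint_Ioc_nat_mul {t : ℝ} (ht : 0 ≤ t) :
    Pairwise (Function.onFun Disjoint fun n : ℕ => Ioc ((n : ℝ) * t) ((n + 1) * t)) := by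
  simpa using (monotone_natCast_mul ht).pairwise_disjoint_on_Ioc_succ

section ExpWeight

variable {g : ℝ → ℝ≥0∞} {c t : ℝ}

theorem setLIntegral_Ioc_nat_mul_exp_mul_le (hg : AntitoneOn g (Ici 0)) (hc : 0 ≤ c)
    (ht : 0 ≤ t) (n : ℕ) :
    ∫⁻ s in Ioc (n * t) ((n + 1) * t), ENNReal.ofReal (Real.exp (-c * s)) * g s ≤
      ENNReal.ofReal (Real.exp (-c * t)) ^ n * ∫⁻ s in Ioc 0 t, g s := by
  have hshift : Ioc ((n : ℝ) * t) ((n + 1) * t) = Ioc (0 + n * t) (t + n * t) := by ring_nf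
  rw [hshift, ← setLIntegral_Ioc_comp_add_right,
    ← lintegral_const_mul' _ _ (ENNReal.pow_ne_top ENNReal.ofReal_ne_top)]
  refine setLIntegral_mono' measurableSet_Ioc fun s hs => mul_le_mul' ?_ ?_
  · rw [← ENNReal.ofReal_pow (Real.exp_pos _).le, ← Real.exp_nat_mul]
    exact ENNReal.ofReal_le_ofReal (Real.exp_le_exp.2 (by nlinarith [hs.1]))
  · have hs0 : (0 : ℝ) ≤ s := hs.1.le
    exact hg hs0 (by positivity : (0 : ℝ) ≤ s + n * t) (le_add_of_nonneg_right (by positivity))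

theorem setLIntegral_Ioi_exp_mul_le (hg : AntitoneOn g (Ici 0)) (hc : 0 ≤ c) (ht : 0 < t) :
    ∫⁻ s in Ioi 0, ENNReal.ofReal (Real.exp (-c * s)) * g s ≤
      (1 - ENNReal.ofReal (Real.exp (-c * t)))⁻¹ * ∫⁻ s in Ioc 0 t, g s := by
  rw [← iUnion_Ioc_nat_mul ht,
    lintegral_iUnion (fun _ => measurableSet_Ioc) (pairwise_disjoint_Ioc_nat_mul ht.le)]
  calc _ ≤ ∑' n : ℕ, ENNReal.ofReal (Real.exp (-c * t)) ^ n * ∫⁻ s in Ioc 0 t, g s :=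
        ENNReal.tsum_le_tsum (setLIntegral_Ioc_nat_mul_exp_mul_le hg hc ht.le)
    _ = _ := by rw [ENNReal.tsum_mul_right, ENNReal.tsum_geometric]

theorem ofReal_one_sub_exp_mul_setLIntegral_Ioi_le (hg : AntitoneOn g (Ici 0)) (hc : 0 ≤ c)
    (ht : 0 < t) :
    ENNReal.ofReal (1 - Real.exp (-c * t)) *
        ∫⁻ s in Ioi 0, ENNReal.ofReal (Real.exp (-c * s)) * g s ≤
      ∫⁻ s in Ioc 0 t, g s := by
  set q := 1 - ENNReal.ofReal (Real.exp (-c * t))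
  calc _ ≤ q * (q⁻¹ * ∫⁻ s in Ioc 0 t, g s) := by
        rw [ENNReal.ofReal_sub _ (Real.exp_pos _).le, ENNReal.ofReal_one]
        exact mul_le_mul_right (setLIntegral_Ioi_exp_mul_le hg hc ht) q
    _ ≤ ∫⁻ s in Ioc 0 t, g s := by
        rw [← mul_assoc]
        exact mul_le_of_le_one_left' (ENNReal.mul_inv_le_one q)

theorem setLIntegral_Ioc_le_exp_mul_setLIntegral_Ioi (hc : 0 ≤ c) :
    ∫⁻ s in Ioc 0 t, g s ≤
      ENNReal.ofReal (Real.exp (c * t)) *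
        ∫⁻ s in Ioi 0, ENNReal.ofReal (Real.exp (-c * s)) * g s := by
  calc ∫⁻ s in Ioc 0 t, g s
      ≤ ∫⁻ s in Ioc 0 t, ENNReal.ofReal (Real.exp (c * t)) *
          (ENNReal.ofReal (Real.exp (-c * s)) * g s) := by
        refine setLIntegral_mono' measurableSet_Ioc fun s hs => ?_
        rw [← mul_assoc, ← ENNReal.ofReal_mul (Real.exp_pos _).le, ← Real.exp_add]
        refine le_mul_of_one_le_left' (ENNReal.one_le_ofReal.2 (Real.one_le_exp ?_))
        nlinarith [hs.2]
    _ = ENNReal.ofReal (Real.exp (c * t)) *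
          ∫⁻ s in Ioc 0 t, ENNReal.ofReal (Real.exp (-c * s)) * g s :=
        lintegral_const_mul' _ _ ENNReal.ofReal_ne_top
    _ ≤ _ := mul_le_mul_right (lintegral_mono_set Ioc_subset_Ioi_self) _

end ExpWeight

/-- For a nonincreasing `g : [0,∞) → [0,∞]` and all `t, λ > 0`,
`(1 − e^{−2t/λ}) ∫₀^∞ e^{−2s/λ} g(s) ds ≤ ∫₀^t g(s) ds ≤ e^{2t/λ} ∫₀^∞ e^{−2s/λ} g(s) ds`. -/
theorem stmt_0 (g : ℝ → ℝ≥0∞) (hg : AntitoneOn g (Set.Ici (0 : ℝ))) :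
    ∀ t > (0 : ℝ), ∀ l > (0 : ℝ),
      (ENNReal.ofReal (1 - Real.exp (-2 * t / l)) *
          ∫⁻ s in Set.Ioi (0 : ℝ), ENNReal.ofReal (Real.exp (-2 * s / l)) * g s ≤
        ∫⁻ s in Set.Ioc (0 : ℝ) t, g s) ∧
      (∫⁻ s in Set.Ioc (0 : ℝ) t, g s ≤
        ENNReal.ofReal (Real.exp (2 * t / l)) *
          ∫⁻ s in Set.Ioi (0 : ℝ), ENNReal.ofReal (Real.exp (-2 * s / l)) * g s) := by
  intro t ht l hl
  have hc : 0 ≤ 2 / l := by positivity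
  have hrate : ∀ s, -2 * s / l = -(2 / l) * s := fun s => by ring
  rw [show 2 * t / l = 2 / l * t by ring]
  simp only [hrate]
  exact ⟨ofReal_one_sub_exp_mul_setLIntegral_Ioi_le hg hc ht,
    setLIntegral_Ioc_le_exp_mul_setLIntegral_Ioi hc⟩
end

section
/- Let h : [0,∞) → [0,∞) be a nonincreasing function. Then for all α > 0 and t > 0: (1 − e^{−tα}) · ∫₀^∞ e^{−2αs} h(s) ds ≤ ∫₀^t e^{−αs} h(s) ds ≤ e^{tα} · ∫₀^∞ e^{−2αs} h(s) ds. -/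
/-!
The upper bound is pointwise: on `(0, t]`, `e^{-αs} = e^{αs} e^{-2αs} ≤ e^{tα} e^{-2αs}`.
For the lower bound put `g(s) = e^{-2αs} h(s)`. Since `h` is nonincreasing,
`g(s + t) ≤ e^{-2αt} g(s)`, so the integral of `g` over `(nt, (n+1)t]` is at most `e^{-2αnt}`
times its integral over `(0, t]`. Summing the geometric series gives
`(1 - e^{-2αt}) ∫₀^∞ g ≤ ∫₀^t g ≤ ∫₀^t e^{-αs} h(s) ds`, and `1 - e^{-tα} ≤ 1 - e^{-2αt}`.
-/

open MeasureTheory Set Filter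
open scoped ENNReal

theorem Set.Ioi_eq_iUnion_Ioc_add_nat_mul {a t : ℝ} (ht : 0 < t) :
    Ioi a = ⋃ n : ℕ, Ioc (a + n * t) (a + (n + 1) * t) := by
  ext x
  simp only [mem_Ioi, mem_iUnion, mem_Ioc]
  constructor
  · intro hx
    have hpos : 0 < ⌈(x - a) / t⌉₊ := Nat.ceil_pos.2 (div_pos (by linarith) ht)
    obtain ⟨n, hn⟩ := Nat.exists_eq_add_one_of_ne_zero hpos.ne'
    have hlt := Nat.ceil_lt_add_one (div_pos (sub_pos.2 hx) ht).le
    have hle := Nat.le_ceil ((x - a) / t)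
    rw [hn, Nat.cast_add_one] at hlt hle
    refine ⟨n, ?_, ?_⟩
    · linarith [(lt_div_iff₀ ht).1 (by linarith : (n : ℝ) < (x - a) / t)]
    · linarith [(div_le_iff₀ ht).1 hle]
  · rintro ⟨n, hn, -⟩
    nlinarith [n.cast_nonneg (α := ℝ)]

theorem Set.pairwise_disjoint_Ioc_add_nat_mul {a t : ℝ} (ht : 0 ≤ t) :
    Pairwise (Function.onFun Disjoint fun n : ℕ => Ioc (a + n * t) (a + (n + 1) * t)) := by
  have key : ∀ m n : ℕ, m < n →
      Disjoint (Ioc (a + m * t) (a + (m + 1) * t)) (Ioc (a + n * t) (a + (n + 1) * t)) := by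
    intro m n hmn
    have : (m : ℝ) + 1 ≤ n := by exact_mod_cast hmn
    exact Ioc_disjoint_Ioc_of_le (by nlinarith)
  intro m n hmn
  rcases hmn.lt_or_gt with h | h
  exacts [key m n h, (key n m h).symm]

theorem setLIntegral_Ioc_add_const (f : ℝ → ℝ≥0∞) (a b c : ℝ) :
    ∫⁻ s in Ioc (a + c) (b + c), f s = ∫⁻ u in Ioc a b, f (u + c) := by
  rw [← (measurePreserving_add_right volume c).setLIntegral_comp_preimage_emb
    (measurableEmbedding_addRight c), preimage_add_const_Ioc, add_sub_cancel_right,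
    add_sub_cancel_right]

theorem one_sub_mul_setLIntegral_Ioi_le {f : ℝ → ℝ≥0∞} {a t : ℝ} {c : ℝ≥0∞} (ht : 0 < t)
    (hf : ∀ s > a, f (s + t) ≤ c * f s) :
    (1 - c) * ∫⁻ s in Ioi a, f s ≤ ∫⁻ s in Ioc a (a + t), f s := by
  rcases le_or_gt 1 c with hc | hc
  · simp [tsub_eq_zero_of_le hc]
  have iterate : ∀ n : ℕ, ∀ s > a, f (s + n * t) ≤ c ^ n * f s := by
    intro n
    induction n with
    | zero => simp
    | succ n ih =>
      intro s hs
      calc f (s + (n + 1 : ℕ) * t) = f (s + n * t + t) := by congr 1; push_cast; ring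
        _ ≤ c * f (s + n * t) := hf _ (by nlinarith [n.cast_nonneg (α := ℝ)])
        _ ≤ c * (c ^ n * f s) := by gcongr; exact ih s hs
        _ = c ^ (n + 1) * f s := by ring
  have piece : ∀ n : ℕ, ∫⁻ s in Ioc (a + n * t) (a + (n + 1) * t), f s
      ≤ c ^ n * ∫⁻ s in Ioc a (a + t), f s := by
    intro n
    calc ∫⁻ s in Ioc (a + n * t) (a + (n + 1) * t), f s
        = ∫⁻ u in Ioc a (a + t), f (u + n * t) := by
          rw [← setLIntegral_Ioc_add_const]; congr 3; ring
      _ ≤ ∫⁻ u in Ioc a (a + t), c ^ n * f u :=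
          setLIntegral_mono' measurableSet_Ioc fun u hu => iterate n u hu.1
      _ = c ^ n * ∫⁻ s in Ioc a (a + t), f s :=
          lintegral_const_mul' _ _ (ENNReal.pow_ne_top (hc.trans ENNReal.one_lt_top).ne)
  calc (1 - c) * ∫⁻ s in Ioi a, f s
      = (1 - c) * ∑' n : ℕ, ∫⁻ s in Ioc (a + n * t) (a + (n + 1) * t), f s := by
        rw [Ioi_eq_iUnion_Ioc_add_nat_mul ht,
          lintegral_iUnion (fun _ => measurableSet_Ioc) (pairwise_disjoint_Ioc_add_nat_mul ht.le)]
    _ ≤ (1 - c) * ((1 - c)⁻¹ * ∫⁻ s in Ioc a (a + t), f s) := by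
        rw [← ENNReal.tsum_geometric, ← ENNReal.tsum_mul_right]
        gcongr with n
        exact piece n
    _ ≤ ∫⁻ s in Ioc a (a + t), f s := by
        rw [← mul_assoc]
        exact mul_le_of_le_one_left bot_le (ENNReal.mul_inv_le_one _)

theorem ofReal_exp_mul_le_of_antitoneOn {h : ℝ → ℝ≥0∞} (hh : AntitoneOn h (Ici 0))
    (β : ℝ) {s t : ℝ} (hs : 0 ≤ s) (ht : 0 ≤ t) :
    ENNReal.ofReal (Real.exp (-(β * (s + t)))) * h (s + t) ≤
      ENNReal.ofReal (Real.exp (-(β * t))) * (ENNReal.ofReal (Real.exp (-(β * s))) * h s) := by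
  rw [← mul_assoc, ← ENNReal.ofReal_mul (Real.exp_nonneg _), ← Real.exp_add]
  gcongr
  · exact le_of_eq (by ring)
  · exact hh (mem_Ici.2 hs) (mem_Ici.2 (by linarith)) (by linarith)

theorem one_sub_exp_mul_lintegral_Ioi_le_lintegral_Ioc {h : ℝ → ℝ≥0∞}
    (hh : AntitoneOn h (Ici 0)) {α t : ℝ} (hα : 0 ≤ α) (ht : 0 < t) :
    ENNReal.ofReal (1 - Real.exp (-(t * α))) *
        ∫⁻ s in Ioi 0, ENNReal.ofReal (Real.exp (-(2 * α * s))) * h s ≤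
      ∫⁻ s in Ioc 0 t, ENNReal.ofReal (Real.exp (-(α * s))) * h s := by
  set g : ℝ → ℝ≥0∞ := fun s => ENNReal.ofReal (Real.exp (-(2 * α * s))) * h s
  have shift : ∀ s > 0, g (s + t) ≤ ENNReal.ofReal (Real.exp (-(2 * α * t))) * g s :=
    fun s hs => ofReal_exp_mul_le_of_antitoneOn hh (2 * α) hs.le ht.le
  have weight_le : ∀ s ∈ Ioc 0 t, g s ≤ ENNReal.ofReal (Real.exp (-(α * s))) * h s := by
    intro s hs
    dsimp only [g]
    gcongr
    exacts [hs.1.le, by linarith]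
  have coeff_le : ENNReal.ofReal (1 - Real.exp (-(t * α)))
      ≤ 1 - ENNReal.ofReal (Real.exp (-(2 * α * t))) := by
    rw [ENNReal.ofReal_sub _ (Real.exp_nonneg _), ENNReal.ofReal_one]
    exact tsub_le_tsub_left (ENNReal.ofReal_le_ofReal (Real.exp_le_exp.2 (by nlinarith))) 1
  calc ENNReal.ofReal (1 - Real.exp (-(t * α))) * ∫⁻ s in Ioi 0, g s
      ≤ (1 - ENNReal.ofReal (Real.exp (-(2 * α * t)))) * ∫⁻ s in Ioi 0, g s := by
        gcongr
    _ ≤ ∫⁻ s in Ioc 0 (0 + t), g s := one_sub_mul_setLIntegral_Ioi_le ht shift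
    _ ≤ _ := by rw [zero_add]; exact setLIntegral_mono' measurableSet_Ioc weight_le

theorem lintegral_Ioc_le_exp_mul_lintegral_Ioi (h : ℝ → ℝ≥0∞) {α t : ℝ} (hα : 0 ≤ α) :
    ∫⁻ s in Ioc 0 t, ENNReal.ofReal (Real.exp (-(α * s))) * h s ≤
      ENNReal.ofReal (Real.exp (t * α)) *
        ∫⁻ s in Ioi 0, ENNReal.ofReal (Real.exp (-(2 * α * s))) * h s := by
  set g : ℝ → ℝ≥0∞ := fun s => ENNReal.ofReal (Real.exp (-(2 * α * s))) * h s
  have weight_ge : ∀ s ∈ Ioc 0 t,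
      ENNReal.ofReal (Real.exp (-(α * s))) * h s ≤ ENNReal.ofReal (Real.exp (t * α)) * g s := by
    intro s hs
    dsimp only [g]
    rw [← mul_assoc, ← ENNReal.ofReal_mul (Real.exp_nonneg _), ← Real.exp_add]
    gcongr
    nlinarith [hs.2]
  calc _ ≤ ∫⁻ s in Ioc 0 t, ENNReal.ofReal (Real.exp (t * α)) * g s :=
        setLIntegral_mono' measurableSet_Ioc weight_ge
    _ = ENNReal.ofReal (Real.exp (t * α)) * ∫⁻ s in Ioc 0 t, g s :=
        lintegral_const_mul' _ _ ENNReal.ofReal_ne_top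
    _ ≤ ENNReal.ofReal (Real.exp (t * α)) * ∫⁻ s in Ioi 0, g s := by
        gcongr
        exact Ioc_subset_Ioi_self

/-- For a nonincreasing `h : [0,∞) → [0,∞]` and all `α, t > 0`,
`(1 − e^{−tα}) ∫₀^∞ e^{−2αs} h(s) ds ≤ ∫₀^t e^{−αs} h(s) ds ≤ e^{tα} ∫₀^∞ e^{−2αs} h(s) ds`. -/
theorem stmt_1 (h : ℝ → ℝ≥0∞) (hh : AntitoneOn h (Set.Ici (0 : ℝ))) :
    ∀ α > (0 : ℝ), ∀ t > (0 : ℝ),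
      (ENNReal.ofReal (1 - Real.exp (-(t * α))) *
          ∫⁻ s in Set.Ioi (0 : ℝ), ENNReal.ofReal (Real.exp (-(2 * α * s))) * h s ≤
        ∫⁻ s in Set.Ioc (0 : ℝ) t, ENNReal.ofReal (Real.exp (-(α * s))) * h s) ∧
      (∫⁻ s in Set.Ioc (0 : ℝ) t, ENNReal.ofReal (Real.exp (-(α * s))) * h s ≤
        ENNReal.ofReal (Real.exp (t * α)) *
          ∫⁻ s in Set.Ioi (0 : ℝ), ENNReal.ofReal (Real.exp (-(2 * α * s))) * h s) :=
  fun _ hα _ ht => ⟨one_sub_exp_mul_lintegral_Ioi_le_lintegral_Ioc hh hα.le ht,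
    lintegral_Ioc_le_exp_mul_lintegral_Ioi h hα.le⟩
end

section
/- Let f, g : [0,∞) → [0,∞) be nondecreasing functions such that f(s) ≤ g(s) for all s ≥ 0 and g is subadditive: g(t+s) ≤ g(t) + g(s) for all s, t ≥ 0. Then for every α > 0: ∫₀^∞ e^{−r} f(r/α) dr ≤ e·(α + 2/α) · ∫₀^∞ e^{−r} g(r) dr. -/
open MeasureTheory Set
open scoped ENNReal

/-!
Subadditivity gives `g (n r) ≤ n g r`, so with `n = ⌈1/α⌉₊` monotonicity of `g` yields the pointwise bound
`f (r/α) ≤ g (r/α) ≤ g (n r) ≤ n g r`. Integrating against `e^{-r}` leaves the constant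
`n ≤ 1/α + 1`, which is at most `e (α + 2/α)`.
-/

section Subadditive

variable {g : ℝ → ℝ≥0∞} (hsub : ∀ s ≥ (0 : ℝ), ∀ t ≥ (0 : ℝ), g (t + s) ≤ g t + g s)
include hsub

theorem apply_natCast_mul_le_of_subadditive {r : ℝ} (hr : 0 ≤ r) {n : ℕ} (hn : n ≠ 0) :
    g (n * r) ≤ n * g r := by
  induction n, Nat.one_le_iff_ne_zero.mpr hn using Nat.le_induction with
  | base => simp
  | succ n hn ih =>
    calc g ((n + 1 : ℕ) * r) = g (n * r + r) := by push_cast; ring_nf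
      _ ≤ g (n * r) + g r := hsub r hr _ (by positivity)
      _ ≤ n * g r + g r := by gcongr; exact ih (by omega)
      _ = (n + 1 : ℕ) * g r := by push_cast; ring

theorem apply_div_le_ceil_inv_mul_of_subadditive (hg : MonotoneOn g (Ici 0)) {r α : ℝ}
    (hr : 0 ≤ r) (hα : 0 < α) : g (r / α) ≤ ⌈α⁻¹⌉₊ * g r := by
  have hn : ⌈α⁻¹⌉₊ ≠ 0 := (Nat.ceil_pos.mpr (inv_pos.mpr hα)).ne'
  have hle : r / α ≤ ⌈α⁻¹⌉₊ * r := by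
    rw [div_eq_inv_mul]
    exact mul_le_mul_of_nonneg_right (Nat.le_ceil _) hr
  exact (hg (mem_Ici.mpr (by positivity)) (mem_Ici.mpr (by positivity)) hle).trans
    (apply_natCast_mul_le_of_subadditive hsub hr hn)

end Subadditive

theorem natCeil_inv_le_exp_one_mul {α : ℝ} (hα : 0 < α) :
    (⌈α⁻¹⌉₊ : ℝ) ≤ Real.exp 1 * (α + 2 / α) := by
  have hceil : (⌈α⁻¹⌉₊ : ℝ) < α⁻¹ + 1 := Nat.ceil_lt_add_one (inv_nonneg.mpr hα.le)
  have hsum : 1 ≤ α + α⁻¹ := by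
    rcases le_total α 1 with h | h
    · linarith [(one_le_inv₀ hα).mpr h]
    · linarith [inv_nonneg.mpr hα.le]
  have hexp : 1 ≤ Real.exp 1 := Real.one_le_exp zero_le_one
  have hpos : 0 ≤ α + 2 / α := by positivity
  calc (⌈α⁻¹⌉₊ : ℝ) ≤ α + 2 / α := by rw [div_eq_mul_inv]; linarith
    _ ≤ Real.exp 1 * (α + 2 / α) := le_mul_of_one_le_left hpos hexp

theorem stmt_5_general (f g : ℝ → ℝ≥0∞)
    (hg : MonotoneOn g (Set.Ici (0 : ℝ)))
    (hfg : ∀ s ≥ (0 : ℝ), f s ≤ g s)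
    (hsub : ∀ s ≥ (0 : ℝ), ∀ t ≥ (0 : ℝ), g (t + s) ≤ g t + g s) :
    ∀ α > (0 : ℝ),
      ∫⁻ r in Set.Ioi (0 : ℝ), ENNReal.ofReal (Real.exp (-r)) * f (r / α) ≤
        ENNReal.ofReal (Real.exp 1 * (α + 2 / α)) *
          ∫⁻ r in Set.Ioi (0 : ℝ), ENNReal.ofReal (Real.exp (-r)) * g r := by
  intro α hα
  have hpointwise : ∀ r ∈ Ioi (0 : ℝ), ENNReal.ofReal (Real.exp (-r)) * f (r / α) ≤
      ⌈α⁻¹⌉₊ * (ENNReal.ofReal (Real.exp (-r)) * g r) := fun r hr => by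
    rw [mul_left_comm]
    gcongr
    exact (hfg _ (div_nonneg (le_of_lt hr) hα.le)).trans
      (apply_div_le_ceil_inv_mul_of_subadditive hsub hg (le_of_lt hr) hα)
  have hconst : (⌈α⁻¹⌉₊ : ℝ≥0∞) ≤ ENNReal.ofReal (Real.exp 1 * (α + 2 / α)) := by
    rw [← ENNReal.ofReal_natCast]
    exact ENNReal.ofReal_le_ofReal (natCeil_inv_le_exp_one_mul hα)
  calc ∫⁻ r in Ioi 0, ENNReal.ofReal (Real.exp (-r)) * f (r / α)
      ≤ ∫⁻ r in Ioi 0, ⌈α⁻¹⌉₊ * (ENNReal.ofReal (Real.exp (-r)) * g r) :=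
        setLIntegral_mono' measurableSet_Ioi hpointwise
    _ = ⌈α⁻¹⌉₊ * ∫⁻ r in Ioi 0, ENNReal.ofReal (Real.exp (-r)) * g r :=
        lintegral_const_mul' _ _ (ENNReal.natCast_ne_top _)
    _ ≤ _ := by gcongr

/-- if `f ≤ g` are nondecreasing on `[0,∞)` and `g` is subadditive, then
`∫₀^∞ e^{−r} f(r/α) dr ≤ e (α + 2/α) ∫₀^∞ e^{−r} g(r) dr` for every `α > 0`. -/
theorem stmt_5 (f g : ℝ → ℝ≥0∞)
    (hf : MonotoneOn f (Set.Ici (0 : ℝ))) (hg : MonotoneOn g (Set.Ici (0 : ℝ)))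
    (hfg : ∀ s ≥ (0 : ℝ), f s ≤ g s)
    (hsub : ∀ s ≥ (0 : ℝ), ∀ t ≥ (0 : ℝ), g (t + s) ≤ g t + g s) :
    ∀ α > (0 : ℝ),
      ∫⁻ r in Set.Ioi (0 : ℝ), ENNReal.ofReal (Real.exp (-r)) * f (r / α) ≤
        ENNReal.ofReal (Real.exp 1 * (α + 2 / α)) *
          ∫⁻ r in Set.Ioi (0 : ℝ), ENNReal.ofReal (Real.exp (-r)) * g r :=
  stmt_5_general f g hg hfg hsub
end

section
/- Let g : (0,∞) → [0,∞) be a nonincreasing function, and let α > 0 and t > 0. Then ∫_t^∞ e^{−αs} g(s) ds ≤ [e^{−tα}/(1 − e^{−tα})] · ∫₀^t e^{−αs} g(s) ds. -/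
/-!
Cut `(t, ∞)` into the intervals `(t + n t, t + (n + 1) t]`. Translating the `n`-th one back onto
`(0, t]` multiplies the weight `e^{-α s}` by `e^{-α (n + 1) t}` and, `g` being nonincreasing, can only
increase `g`; so the `n`-th piece is at most `e^{-(n + 1) t α}` times the integral over `(0, t]`, and
summing the geometric series gives the factor `e^{-tα} / (1 - e^{-tα})`.
-/

open MeasureTheory Set
open scoped ENNReal

section OrderedAddCommGroup

variable {M : Type*} [AddCommGroup M] [LinearOrder M] [IsOrderedAddMonoid M]

theorem iUnion_Ioc_add_nsmul [Archimedean M] {p : M} (hp : 0 < p) (a : M) :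
    ⋃ n : ℕ, Ioc (a + n • p) (a + (n + 1) • p) = Ioi a := by
  refine Subset.antisymm (iUnion_subset fun n x hx => ?_) fun x hx => ?_
  · exact lt_of_le_of_lt (le_add_of_nonneg_right (nsmul_nonneg hp.le n)) hx.1
  obtain ⟨n, hn⟩ := mem_iUnion.mp ((iUnion_Ioc_add_zsmul hp a).ge (mem_univ x))
  have hn0 : 0 ≤ n := by
    by_contra! h
    have : (n + 1) • p ≤ 0 := smul_nonpos_of_nonpos_of_nonneg (by omega) hp.le
    exact (lt_irrefl x) (hn.2.trans_lt ((add_le_of_nonpos_right this).trans_lt hx))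
  lift n to ℕ using hn0
  exact mem_iUnion.mpr ⟨n, by simpa [natCast_zsmul, add_smul] using hn⟩

theorem pairwise_disjoint_Ioc_add_nsmul (a p : M) :
    Pairwise (Function.onFun Disjoint fun n : ℕ => Ioc (a + n • p) (a + (n + 1) • p)) :=
  fun _ _ hmn => by
    simpa [natCast_zsmul, add_smul] using
      pairwise_disjoint_Ioc_add_zsmul a p (Nat.cast_injective.ne hmn)

end OrderedAddCommGroup

theorem lintegral_Ioi_eq_tsum_Ioc {p : ℝ} (hp : 0 < p) (a : ℝ) (f : ℝ → ℝ≥0∞) :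
    ∫⁻ s in Ioi a, f s = ∑' n : ℕ, ∫⁻ s in Ioc (a + n • p) (a + (n + 1) • p), f s := by
  rw [← iUnion_Ioc_add_nsmul hp a]
  exact lintegral_iUnion (fun _ => measurableSet_Ioc) (pairwise_disjoint_Ioc_add_nsmul a p) f

theorem ENNReal.tsum_ofReal_pow_succ {r : ℝ} (hr₀ : 0 ≤ r) (hr₁ : r < 1) :
    ∑' n : ℕ, ENNReal.ofReal (r ^ (n + 1)) = ENNReal.ofReal (r / (1 - r)) := by
  rw [← ENNReal.ofReal_tsum_of_nonneg (fun n => by positivity)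
    ((summable_geometric_of_lt_one hr₀ hr₁).mul_left r |>.congr fun n => (pow_succ' r n).symm)]
  congr 1
  simp_rw [pow_succ']
  rw [tsum_mul_left, tsum_geometric_of_lt_one hr₀ hr₁, div_eq_mul_inv]

section ExpWeighted

variable {g : ℝ → ℝ≥0∞}

theorem ofReal_exp_mul_le_of_antitoneOn_s8 (hg : AntitoneOn g (Ioi 0)) (α : ℝ) {c u : ℝ}
    (hc : 0 ≤ c) (hu : 0 < u) :
    ENNReal.ofReal (Real.exp (-(α * (u + c)))) * g (u + c) ≤
      ENNReal.ofReal (Real.exp (-(α * c))) * (ENNReal.ofReal (Real.exp (-(α * u))) * g u) := by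
  have hsplit : Real.exp (-(α * (u + c))) = Real.exp (-(α * c)) * Real.exp (-(α * u)) := by
    rw [← Real.exp_add]; ring_nf
  rw [hsplit, ENNReal.ofReal_mul (Real.exp_pos _).le, mul_assoc]
  gcongr
  exact hg hu (mem_Ioi.mpr (by linarith)) (by linarith)

theorem lintegral_Ioc_add_le_of_antitoneOn (hg : AntitoneOn g (Ioi 0)) (α : ℝ) {c : ℝ}
    (hc : 0 ≤ c) (t : ℝ) :
    ∫⁻ s in Ioc c (c + t), ENNReal.ofReal (Real.exp (-(α * s))) * g s ≤
      ENNReal.ofReal (Real.exp (-(α * c))) *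
        ∫⁻ s in Ioc 0 t, ENNReal.ofReal (Real.exp (-(α * s))) * g s := by
  have hshift := (measurePreserving_add_right volume c).setLIntegral_comp_preimage_emb
    (measurableEmbedding_addRight c) (fun s => ENNReal.ofReal (Real.exp (-(α * s))) * g s)
    (Ioc c (c + t))
  rw [preimage_add_const_Ioc, sub_self, add_sub_cancel_left] at hshift
  rw [← hshift, ← lintegral_const_mul' _ _ ENNReal.ofReal_ne_top]
  exact setLIntegral_mono' measurableSet_Ioc fun u hu => ofReal_exp_mul_le_of_antitoneOn_s8 hg α hc hu.1

end ExpWeighted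

/-- for nonincreasing `g : (0,∞) → [0,∞]` and `α, t > 0`,
`∫_t^∞ e^{−αs} g(s) ds ≤ [e^{−tα}/(1 − e^{−tα})] ∫₀^t e^{−αs} g(s) ds`. -/
theorem stmt_8 (g : ℝ → ℝ≥0∞) (hg : AntitoneOn g (Set.Ioi (0 : ℝ)))
    (α t : ℝ) (hα : 0 < α) (ht : 0 < t) :
    ∫⁻ s in Set.Ioi t, ENNReal.ofReal (Real.exp (-(α * s))) * g s ≤
      ENNReal.ofReal (Real.exp (-(t * α)) / (1 - Real.exp (-(t * α)))) *
        ∫⁻ s in Set.Ioc (0 : ℝ) t, ENNReal.ofReal (Real.exp (-(α * s))) * g s := by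
  set r := Real.exp (-(t * α))
  have hr₁ : r < 1 := Real.exp_lt_one_iff.mpr (by nlinarith)
  have hweight (n : ℕ) : Real.exp (-(α * (t + n • t))) = r ^ (n + 1) := by
    rw [← Real.exp_nat_mul, nsmul_eq_mul]; push_cast; ring_nf
  calc ∫⁻ s in Ioi t, ENNReal.ofReal (Real.exp (-(α * s))) * g s
      = ∑' n : ℕ, ∫⁻ s in Ioc (t + n • t) (t + (n + 1) • t),
          ENNReal.ofReal (Real.exp (-(α * s))) * g s := lintegral_Ioi_eq_tsum_Ioc ht t _
    _ ≤ ∑' n : ℕ, ENNReal.ofReal (r ^ (n + 1)) *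
          ∫⁻ s in Ioc 0 t, ENNReal.ofReal (Real.exp (-(α * s))) * g s :=
        ENNReal.tsum_le_tsum fun n => by
          rw [succ_nsmul, ← add_assoc, ← hweight]
          exact lintegral_Ioc_add_le_of_antitoneOn hg α (by positivity) t
    _ = _ := by rw [ENNReal.tsum_mul_right, ENNReal.tsum_ofReal_pow_succ (Real.exp_pos _).le hr₁]
end

section
/- Let f : ℝ → [0,∞) be a measurable function such that f(ξ)/log|ξ| → ∞ as |ξ| → ∞. Then for every integer n ≥ 0 and every t > 0: ∫_ℝ |ξ|^n e^{−2 t f(ξ)} dξ < ∞. -/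
/-!
Because `f` eventually dominates every multiple of `log ‖ξ‖`, for each `s` the factor
`exp (-c f ξ)` is at most `‖ξ‖ ^ (-s)` outside a compact set. With `s = n + d + 1`
(`d` the dimension) the integrand is `O(‖ξ‖ ^ (-(d + 1)))` at infinity, which is integrable
there by comparison with `(1 + ‖ξ‖) ^ (-(d + 1))`; on compact sets it is bounded by
`‖ξ‖ ^ n` since `f ≥ 0`.
-/

open MeasureTheory Filter Asymptotics Module Real

section Growth

variable {E : Type*} [NormedAddCommGroup E] [ProperSpace E]

theorem eventually_exp_neg_mul_le_norm_rpow_neg {f : E → ℝ}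
    (hgrow : Tendsto (fun ξ ↦ f ξ / log ‖ξ‖) (cocompact E) atTop) {c : ℝ} (hc : 0 < c) (s : ℝ) :
    ∀ᶠ ξ in cocompact E, exp (-c * f ξ) ≤ ‖ξ‖ ^ (-s) := by
  filter_upwards [hgrow.eventually_ge_atTop (s / c),
    tendsto_norm_cocompact_atTop.eventually_gt_atTop 1] with ξ hf hξ
  have hlog : 0 < log ‖ξ‖ := log_pos hξ
  have hsf : s * log ‖ξ‖ ≤ c * f ξ := by
    rw [div_le_div_iff₀ hc hlog] at hf
    linarith
  rw [rpow_def_of_pos (by linarith), exp_le_exp]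
  linarith

end Growth

section Integrability

variable {E : Type*} [NormedAddCommGroup E] [NormedSpace ℝ E] [FiniteDimensional ℝ E]
  [MeasurableSpace E] [BorelSpace E] {μ : Measure E} [μ.IsAddHaarMeasure]

theorem integrableAtFilter_cocompact_norm_rpow_neg {r : ℝ} (hr : (finrank ℝ E : ℝ) < r) :
    IntegrableAtFilter (fun x : E ↦ ‖x‖ ^ (-r)) (cocompact E) μ := by
  refine IsBigO.integrableAtFilter (g := fun x : E ↦ (1 + ‖x‖) ^ (-r)) ?_
    (by fun_prop : Measurable fun x : E ↦ ‖x‖ ^ (-r)).aestronglyMeasurable.stronglyMeasurableAtFilter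
    ((integrable_one_add_norm hr).integrableAtFilter _)
  refine isBigO_iff.2 ⟨2 ^ r, ?_⟩
  filter_upwards [tendsto_norm_cocompact_atTop.eventually_ge_atTop 1] with x hx
  have hx₀ : 0 < ‖x‖ := by linarith
  rw [norm_of_nonneg (by positivity), norm_of_nonneg (by positivity)]
  calc ‖x‖ ^ (-r) = 2 ^ r * (2 * ‖x‖) ^ (-r) := by
        rw [mul_rpow (by norm_num) hx₀.le, ← mul_assoc, ← rpow_add (by norm_num)]
        simp
    _ ≤ 2 ^ r * (1 + ‖x‖) ^ (-r) := by
        gcongr 2 ^ r * ?_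
        exact rpow_le_rpow_of_nonpos (by positivity) (by linarith) (by linarith)

theorem integrable_norm_pow_mul_exp_neg_mul_of_tendsto_div_log {f : E → ℝ} (hmeas : Measurable f)
    (hnonneg : ∀ ξ, 0 ≤ f ξ) (hgrow : Tendsto (fun ξ ↦ f ξ / log ‖ξ‖) (cocompact E) atTop)
    (n : ℕ) {c : ℝ} (hc : 0 < c) :
    Integrable (fun ξ ↦ ‖ξ‖ ^ n * exp (-c * f ξ)) μ := by
  set d : ℝ := (finrank ℝ E : ℝ)
  have hmeas_integrand : AEStronglyMeasurable (fun ξ ↦ ‖ξ‖ ^ n * exp (-c * f ξ)) μ := by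
    fun_prop
  have hloc : LocallyIntegrable (fun ξ ↦ ‖ξ‖ ^ n * exp (-c * f ξ)) μ := by
    refine (continuous_norm.pow n).locallyIntegrable.mono hmeas_integrand (ae_of_all _ fun ξ ↦ ?_)
    have hexp_le_one : exp (-c * f ξ) ≤ 1 := exp_le_one_iff.2 (by nlinarith [hnonneg ξ])
    simp only [Pi.pow_apply, norm_mul, norm_pow, norm_norm, norm_of_nonneg (exp_pos _).le]
    exact mul_le_of_le_one_right (by positivity) hexp_le_one
  refine hloc.integrable_of_isBigO_cocompact (g := fun ξ : E ↦ ‖ξ‖ ^ (-(d + 1))) ?_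
    (integrableAtFilter_cocompact_norm_rpow_neg (by linarith))
  refine IsBigO.of_bound' ?_
  filter_upwards [eventually_exp_neg_mul_le_norm_rpow_neg hgrow hc (n + (d + 1)),
    tendsto_norm_cocompact_atTop.eventually_gt_atTop 0] with ξ hexp hξ
  rw [norm_of_nonneg (by positivity), norm_of_nonneg (by positivity)]
  calc ‖ξ‖ ^ n * exp (-c * f ξ) ≤ ‖ξ‖ ^ n * ‖ξ‖ ^ (-(n + (d + 1))) := by gcongr
    _ = ‖ξ‖ ^ (-(d + 1)) := by
        rw [← rpow_natCast, ← rpow_add hξ]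
        ring_nf

end Integrability

/-- if `f : ℝ → [0,∞)` is measurable with `f(ξ)/log|ξ| → ∞` as `|ξ| → ∞`,
then `∫_ℝ |ξ|^n e^{−2 t f(ξ)} dξ < ∞` for every integer `n ≥ 0` and `t > 0`. -/
theorem stmt_10 (f : ℝ → ℝ) (hmeas : Measurable f) (hnonneg : ∀ ξ, 0 ≤ f ξ)
    (hgrow : Filter.Tendsto (fun ξ : ℝ => f ξ / Real.log |ξ|)
      (Filter.cocompact ℝ) Filter.atTop) :
    ∀ n : ℕ, ∀ t > (0 : ℝ),
      ∫⁻ ξ : ℝ, ENNReal.ofReal (|ξ| ^ n * Real.exp (-2 * t * f ξ)) < ⊤ := by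
  intro n t ht
  have hint := integrable_norm_pow_mul_exp_neg_mul_of_tendsto_div_log (μ := volume) hmeas hnonneg
    hgrow n (mul_pos two_pos ht)
  simpa only [Real.norm_eq_abs, neg_mul] using hint.lintegral_lt_top
end

section
/- Let f : ℝ → [0,∞) be a measurable function such that ∫_ℝ dξ/(α + 2 f(ξ)) < ∞ for some α > 0. Then limsup_{|ξ|→∞} f(ξ)/|ξ| = ∞. -/
open MeasureTheory Set Filter
open scoped ENNReal

/-!
If `f ξ / |ξ|` had a finite limsup at infinity, then `f ξ ≤ D ξ` for all large `ξ`, so the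
integrand `1 / (α + 2 f ξ)` would dominate a multiple of `1 / ξ` near `+∞`, whose integral diverges.
-/

theorem lintegral_Ioi_ofReal_inv_eq_top {R : ℝ} (hR : 0 ≤ R) :
    ∫⁻ ξ in Ioi R, ENNReal.ofReal ξ⁻¹ = ∞ := by
  by_contra h
  have hpos : 0 ≤ᵐ[volume.restrict (Ioi R)] fun ξ : ℝ ↦ ξ⁻¹ := by
    filter_upwards [ae_restrict_mem measurableSet_Ioi] with ξ hξ
    exact inv_nonneg.2 (hR.trans hξ.le)
  exact not_integrableOn_Ioi_inv
    ((lintegral_ofReal_ne_top_iff_integrable measurable_inv.aestronglyMeasurable hpos).1 h)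

theorem lintegral_eq_top_of_eventually_const_mul_inv_le {g : ℝ → ℝ≥0∞} {c : ℝ≥0∞}
    (hc : c ≠ 0) (h : ∀ᶠ ξ in atTop, c * ENNReal.ofReal ξ⁻¹ ≤ g ξ) :
    ∫⁻ ξ, g ξ = ∞ := by
  obtain ⟨R, hR⟩ := eventually_atTop.1 h
  have hR₀ : 0 ≤ max R 0 := le_max_right R 0
  refine top_le_iff.1 ?_
  calc ∞ = c * ∫⁻ ξ in Ioi (max R 0), ENNReal.ofReal ξ⁻¹ := by
        rw [lintegral_Ioi_ofReal_inv_eq_top hR₀, ENNReal.mul_top hc]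
    _ = ∫⁻ ξ in Ioi (max R 0), c * ENNReal.ofReal ξ⁻¹ :=
        (lintegral_const_mul c (by fun_prop)).symm
    _ ≤ ∫⁻ ξ in Ioi (max R 0), g ξ :=
        setLIntegral_mono' measurableSet_Ioi fun ξ hξ ↦ hR ξ ((le_max_left R 0).trans hξ.le)
    _ ≤ ∫⁻ ξ, g ξ := setLIntegral_le_lintegral _ _

theorem exists_eventually_le_mul_of_limsup_lt_top {f : ℝ → ℝ}
    (h : limsup (fun ξ : ℝ ↦ ((f ξ / |ξ| : ℝ) : EReal)) (cocompact ℝ) < ⊤) :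
    ∃ C, ∀ᶠ ξ in atTop, f ξ ≤ C * ξ := by
  obtain ⟨C, hC, -⟩ := EReal.exists_between_coe_real h
  refine ⟨C, ?_⟩
  filter_upwards [(eventually_lt_of_limsup_lt hC).filter_mono atTop_le_cocompact,
    eventually_gt_atTop 0] with ξ hlt hξ
  have hlt : f ξ / ξ < C := by rwa [EReal.coe_lt_coe_iff, abs_of_pos hξ] at hlt
  exact ((div_lt_iff₀ hξ).1 hlt).le

theorem inv_mul_inv_le_one_div_add {α D ξ y : ℝ} (hα : 0 < α) (hξ : 1 ≤ ξ)
    (hy₀ : 0 ≤ y) (hy : y ≤ D * ξ) :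
    (α + 2 * D)⁻¹ * ξ⁻¹ ≤ 1 / (α + 2 * y) := by
  rw [one_div, ← mul_inv]
  exact inv_anti₀ (by positivity) (by nlinarith)

theorem stmt_11_general (f : ℝ → ℝ) (hnonneg : ∀ ξ, 0 ≤ f ξ)
    (α : ℝ) (hα : 0 < α)
    (hint : ∫⁻ ξ : ℝ, ENNReal.ofReal (1 / (α + 2 * f ξ)) < ⊤) :
    Filter.limsup (fun ξ : ℝ => ((f ξ / |ξ| : ℝ) : EReal)) (Filter.cocompact ℝ) = ⊤ := by
  by_contra h
  obtain ⟨C, hC⟩ := exists_eventually_le_mul_of_limsup_lt_top (lt_top_iff_ne_top.2 h)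
  set D := max C 0
  refine hint.ne (lintegral_eq_top_of_eventually_const_mul_inv_le
    (c := ENNReal.ofReal (α + 2 * D)⁻¹) (ENNReal.ofReal_pos.2 (by positivity)).ne' ?_)
  filter_upwards [hC, eventually_ge_atTop 1] with ξ hfξ hξ
  rw [← ENNReal.ofReal_mul (by positivity)]
  refine ENNReal.ofReal_le_ofReal (inv_mul_inv_le_one_div_add hα hξ (hnonneg ξ) ?_)
  exact hfξ.trans (mul_le_mul_of_nonneg_right (le_max_left C 0) (by linarith))

/-- if `f : ℝ → [0,∞)` is measurable with `∫_ℝ dξ/(α + 2 f(ξ)) < ∞` for some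
`α > 0`, then `limsup_{|ξ|→∞} f(ξ)/|ξ| = ∞`. -/
theorem stmt_11 (f : ℝ → ℝ) (hmeas : Measurable f) (hnonneg : ∀ ξ, 0 ≤ f ξ)
    (α : ℝ) (hα : 0 < α)
    (hint : ∫⁻ ξ : ℝ, ENNReal.ofReal (1 / (α + 2 * f ξ)) < ⊤) :
    Filter.limsup (fun ξ : ℝ => ((f ξ / |ξ| : ℝ) : EReal)) (Filter.cocompact ℝ) = ⊤ :=
  stmt_11_general f hnonneg α hα hint
end

section
/- Let ν be a Borel measure on ℝ with ν({0}) = 0 and ∫ min(x², 1) ν(dx) < ∞. Define ψ(ξ) := ∫_ℝ (1 − cos(xξ)) ν(dx), K(ε) := ε^{−2} ∫_{|x|≤ε} x² ν(dx), and G(ε) := ν({x : |x| > ε}). Suppose limsup_{ε→0+} G(ε)/K(ε) < ∞ and ∫_ℝ dξ/(1 + 2 ψ(ξ)) < ∞. Then lim_{|ξ|→∞} ψ(ξ)/|ξ| = ∞. -/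
/-!
The bounds `2 t² / π² ≤ 1 - cos t` for `|t| ≤ π` and `1 - cos t ≤ min (t² / 2) 2` give
`ψ(ξ) ≥ (2/π²) K(1/ξ)` and `ψ(ξ) ≤ K(1/ξ) / 2 + 2 G(1/ξ)`, so under `G ≲ K` near `0` the exponent
`ψ(ξ)` is comparable with `K(1/ξ)`. As `ε² K(ε)` is nondecreasing, `K(1/ξ) ≤ 4 K(1/T)` for
`ξ ∈ [T, 2T]`, hence `ψ ≤ c ψ(T)` on `[T, 2T]`. Then
`T / (1 + 2 c ψ(T)) ≤ ∫_T^{2T} dξ / (1 + 2ψ(ξ))`, and the right side tends to `0` by Dalang's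
condition, so `ψ(T) / T → ∞`. If `K` vanishes somewhere on `(0, 1]`, then `ν` has no mass near
`0`, `ψ` is bounded, and the same estimate applies with an additive constant.
-/

open MeasureTheory Set Filter Real
open scoped ENNReal Topology

lemma tendsto_setLIntegral_Ici_atTop {μ : Measure ℝ} {f : ℝ → ℝ≥0∞}
    (hf : ∫⁻ x, f x ∂μ ≠ ∞) : Tendsto (fun T => ∫⁻ x in Ici T, f x ∂μ) atTop (𝓝 0) := by
  have hempty : ⋂ T : ℝ, Ici T = ∅ :=
    eq_empty_of_forall_notMem fun x hx => (lt_add_one x).not_ge (mem_iInter.1 hx (x + 1))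
  have h := tendsto_measure_iInter_atTop (μ := μ.withDensity f) (s := Ici)
    (fun _ => measurableSet_Ici.nullMeasurableSet) antitone_Ici
    ⟨0, (((withDensity_apply _ measurableSet_Ici).trans_le
      (setLIntegral_le_lintegral _ _)).trans_lt hf.lt_top).ne⟩
  rw [hempty, measure_empty] at h
  exact h.congr fun T => withDensity_apply _ measurableSet_Ici

theorem tendsto_div_atTop_of_lintegral_inv_lt_top {f : ℝ → ℝ} (hf : ∀ ξ, 0 ≤ f ξ)
    (hint : ∫⁻ ξ, ENNReal.ofReal (1 / (1 + f ξ)) ≠ ∞) {c d : ℝ} (hc : 0 < c) (hd : 0 ≤ d)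
    (hdoubling : ∀ᶠ T in atTop, ∀ ξ ∈ Icc T (2 * T), f ξ ≤ c * f T + d) :
    Tendsto (fun T => f T / T) atTop atTop := by
  have hbound : ∀ᶠ T in atTop, ENNReal.ofReal (T / (1 + d + c * f T)) ≤
      ∫⁻ ξ in Ici T, ENNReal.ofReal (1 / (1 + f ξ)) := by
    filter_upwards [hdoubling, eventually_gt_atTop 0] with T hT hT0
    have hden : 0 < 1 + d + c * f T := by have := hf T; positivity
    calc ENNReal.ofReal (T / (1 + d + c * f T))
        = ∫⁻ _ in Icc T (2 * T), ENNReal.ofReal (1 / (1 + d + c * f T)) := by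
          rw [setLIntegral_const, Real.volume_Icc, ← ENNReal.ofReal_mul (by positivity)]
          congr 1
          ring
      _ ≤ ∫⁻ ξ in Icc T (2 * T), ENNReal.ofReal (1 / (1 + f ξ)) := by
          refine lintegral_mono_ae (ae_restrict_of_forall_mem measurableSet_Icc fun ξ hξ => ?_)
          have := hf ξ
          exact ENNReal.ofReal_le_ofReal
            (one_div_le_one_div_of_le (by positivity) (by linarith [hT ξ hξ]))
      _ ≤ ∫⁻ ξ in Ici T, ENNReal.ofReal (1 / (1 + f ξ)) := lintegral_mono_set Icc_subset_Ici_self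
  have hpos : ∀ᶠ T in atTop, 0 < T / (1 + d + c * f T) := by
    filter_upwards [eventually_gt_atTop 0] with T hT
    have := hf T
    positivity
  have hsmall : Tendsto (fun T => T / (1 + d + c * f T)) atTop (𝓝[>] 0) := by
    have h := (ENNReal.tendsto_toReal ENNReal.zero_ne_top).comp
      (tendsto_of_tendsto_of_tendsto_of_le_of_le' tendsto_const_nhds
        (tendsto_setLIntegral_Ici_atTop hint) (.of_forall fun _ => zero_le) hbound)
    rw [ENNReal.toReal_zero] at h
    refine tendsto_nhdsWithin_iff.2 ⟨h.congr' ?_, hpos⟩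
    filter_upwards [hpos] with T hT
    exact ENNReal.toReal_ofReal hT.le
  -- `f T / T = ((T / (1 + d + c * f T))⁻¹ - (1 + d) / T) / c`
  have hlarge := (hsmall.inv_tendsto_nhdsGT_zero.atTop_add
    ((tendsto_const_nhds (x := -(1 + d))).div_atTop tendsto_id)).atTop_div_const hc
  refine hlarge.congr' ?_
  filter_upwards [eventually_gt_atTop 0] with T hT
  simp only [Pi.inv_apply, id]
  field_simp
  ring

noncomputable def levyExponent (ν : Measure ℝ) (ξ : ℝ) : ℝ :=
  (∫⁻ x, ENNReal.ofReal (1 - cos (x * ξ)) ∂ν).toReal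

noncomputable def fellerK (ν : Measure ℝ) (ε : ℝ) : ℝ :=
  (ε ^ 2)⁻¹ * (∫⁻ x in {x : ℝ | |x| ≤ ε}, ENNReal.ofReal (x ^ 2) ∂ν).toReal

noncomputable def fellerG (ν : Measure ℝ) (ε : ℝ) : ℝ := (ν {x : ℝ | ε < |x|}).toReal

lemma levyExponent_nonneg (ν : Measure ℝ) (ξ : ℝ) : 0 ≤ levyExponent ν ξ :=
  ENNReal.toReal_nonneg

lemma fellerK_nonneg (ν : Measure ℝ) (ε : ℝ) : 0 ≤ fellerK ν ε := by
  unfold fellerK; positivity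

lemma levyExponent_neg (ν : Measure ℝ) (ξ : ℝ) : levyExponent ν (-ξ) = levyExponent ν ξ := by
  simp only [levyExponent, mul_neg, cos_neg]

section LevyMeasure

variable {ν : Measure ℝ}

lemma lintegral_sq_abs_le_lt_top (hν : ∫⁻ x, ENNReal.ofReal (min (x ^ 2) 1) ∂ν < ∞)
    {ε : ℝ} (hε : ε ≤ 1) :
    ∫⁻ x in {x : ℝ | |x| ≤ ε}, ENNReal.ofReal (x ^ 2) ∂ν < ∞ := by
  refine lt_of_le_of_lt ?_ hν
  calc ∫⁻ x in {x : ℝ | |x| ≤ ε}, ENNReal.ofReal (x ^ 2) ∂ν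
      ≤ ∫⁻ x in {x : ℝ | |x| ≤ ε}, ENNReal.ofReal (min (x ^ 2) 1) ∂ν := by
        refine setLIntegral_mono (by fun_prop) fun x hx => ?_
        have : x ^ 2 ≤ 1 := by nlinarith [sq_abs x, abs_nonneg x, hx.out]
        rw [min_eq_left this]
    _ ≤ _ := setLIntegral_le_lintegral _ _

lemma measure_lt_abs_lt_top (hν : ∫⁻ x, ENNReal.ofReal (min (x ^ 2) 1) ∂ν < ∞)
    {ε : ℝ} (hε : 0 < ε) : ν {x : ℝ | ε < |x|} < ∞ := by
  have hpos : ENNReal.ofReal (min (ε ^ 2) 1) ≠ 0 := by simp [hε.ne']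
  calc ν {x : ℝ | ε < |x|}
      ≤ ν {x | ENNReal.ofReal (min (ε ^ 2) 1) ≤ ENNReal.ofReal (min (x ^ 2) 1)} := by
        refine measure_mono fun x hx => ENNReal.ofReal_le_ofReal (min_le_min_right _ ?_)
        nlinarith [sq_abs x, hx.out]
    _ ≤ (∫⁻ x, ENNReal.ofReal (min (x ^ 2) 1) ∂ν) / ENNReal.ofReal (min (ε ^ 2) 1) :=
        meas_ge_le_lintegral_div (by fun_prop) hpos ENNReal.ofReal_ne_top
    _ < ∞ := ENNReal.div_lt_top hν.ne hpos

lemma lintegral_one_sub_cos_lt_top (hν : ∫⁻ x, ENNReal.ofReal (min (x ^ 2) 1) ∂ν < ∞)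
    (ξ : ℝ) : ∫⁻ x, ENNReal.ofReal (1 - cos (x * ξ)) ∂ν < ∞ := by
  calc ∫⁻ x, ENNReal.ofReal (1 - cos (x * ξ)) ∂ν
      ≤ ∫⁻ x, ENNReal.ofReal (ξ ^ 2 + 2) * ENNReal.ofReal (min (x ^ 2) 1) ∂ν := by
        refine lintegral_mono fun x => ?_
        rw [← ENNReal.ofReal_mul (by positivity)]
        refine ENNReal.ofReal_le_ofReal ?_
        rcases le_total (x ^ 2) 1 with hx | hx
        · rw [min_eq_left hx]
          nlinarith [one_sub_sq_div_two_le_cos (x := x * ξ), sq_nonneg x, sq_nonneg ξ]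
        · rw [min_eq_right hx]
          nlinarith [neg_one_le_cos (x * ξ), sq_nonneg ξ]
    _ = ENNReal.ofReal (ξ ^ 2 + 2) * ∫⁻ x, ENNReal.ofReal (min (x ^ 2) 1) ∂ν :=
        lintegral_const_mul' _ _ ENNReal.ofReal_ne_top
    _ < ∞ := ENNReal.mul_lt_top ENNReal.ofReal_lt_top hν

lemma lintegral_one_sub_cos_le (ξ ε : ℝ) :
    ∫⁻ x, ENNReal.ofReal (1 - cos (x * ξ)) ∂ν ≤
      ENNReal.ofReal (ξ ^ 2 / 2) * ∫⁻ x in {x : ℝ | |x| ≤ ε}, ENNReal.ofReal (x ^ 2) ∂ν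
        + 2 * ν {x : ℝ | ε < |x|} := by
  have hs : MeasurableSet {x : ℝ | |x| ≤ ε} := measurableSet_le (by fun_prop) (by fun_prop)
  have hsc : {x : ℝ | |x| ≤ ε}ᶜ = {x : ℝ | ε < |x|} := by ext; simp
  rw [← lintegral_add_compl _ hs, hsc, ← lintegral_const_mul' _ _ ENNReal.ofReal_ne_top,
    ← setLIntegral_const]
  gcongr with x
  · rw [← ENNReal.ofReal_mul (by positivity)]
    exact ENNReal.ofReal_le_ofReal
      (by nlinarith [one_sub_sq_div_two_le_cos (x := x * ξ)])
  · calc ENNReal.ofReal (1 - cos (x * ξ)) ≤ ENNReal.ofReal 2 :=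
          ENNReal.ofReal_le_ofReal (by linarith [neg_one_le_cos (x * ξ)])
      _ = 2 := ENNReal.ofReal_ofNat 2

lemma two_div_pi_sq_mul_fellerK_le_levyExponent
    (hν : ∫⁻ x, ENNReal.ofReal (min (x ^ 2) 1) ∂ν < ∞) (ξ : ℝ) :
    2 / π ^ 2 * fellerK ν |ξ|⁻¹ ≤ levyExponent ν ξ := by
  set m := ∫⁻ x in {x : ℝ | |x| ≤ |ξ|⁻¹}, ENNReal.ofReal (x ^ 2) ∂ν
  have hK : fellerK ν |ξ|⁻¹ = ξ ^ 2 * m.toReal := by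
    rw [fellerK, inv_pow, inv_inv, sq_abs]
  have hle : ENNReal.ofReal (2 / π ^ 2 * ξ ^ 2) * m ≤
      ∫⁻ x, ENNReal.ofReal (1 - cos (x * ξ)) ∂ν := by
    rw [← lintegral_const_mul' _ _ ENNReal.ofReal_ne_top]
    refine (setLIntegral_mono (by fun_prop) fun x hx => ?_).trans (setLIntegral_le_lintegral _ _)
    have hxξ : |x * ξ| ≤ π := by
      calc |x * ξ| = |x| * |ξ| := abs_mul x ξ
        _ ≤ |ξ|⁻¹ * |ξ| := by gcongr; exact hx
        _ ≤ 1 := inv_mul_le_one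
        _ ≤ π := by linarith [pi_gt_three]
    rw [← ENNReal.ofReal_mul (by positivity)]
    exact ENNReal.ofReal_le_ofReal (by nlinarith [cos_le_one_sub_mul_cos_sq hxξ])
  calc 2 / π ^ 2 * fellerK ν |ξ|⁻¹ = (ENNReal.ofReal (2 / π ^ 2 * ξ ^ 2) * m).toReal := by
        rw [hK, ENNReal.toReal_mul, ENNReal.toReal_ofReal (by positivity), mul_assoc]
    _ ≤ levyExponent ν ξ := ENNReal.toReal_mono (lintegral_one_sub_cos_lt_top hν ξ).ne hle

lemma levyExponent_le (hν : ∫⁻ x, ENNReal.ofReal (min (x ^ 2) 1) ∂ν < ∞)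
    {ε : ℝ} (hε : 0 < ε) (hε1 : ε ≤ 1) (ξ : ℝ) :
    levyExponent ν ξ ≤ (ξ * ε) ^ 2 / 2 * fellerK ν ε + 2 * fellerG ν ε := by
  have hm := (lintegral_sq_abs_le_lt_top hν hε1).ne
  have hfin₁ := ENNReal.mul_ne_top ENNReal.ofReal_ne_top hm (a := ENNReal.ofReal (ξ ^ 2 / 2))
  have hfin₂ := ENNReal.mul_ne_top ENNReal.ofNat_ne_top (measure_lt_abs_lt_top hν hε).ne
    (a := 2)
  calc levyExponent ν ξ
      ≤ (ENNReal.ofReal (ξ ^ 2 / 2) * ∫⁻ x in {x : ℝ | |x| ≤ ε}, ENNReal.ofReal (x ^ 2) ∂ν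
          + 2 * ν {x : ℝ | ε < |x|}).toReal :=
        ENNReal.toReal_mono (ENNReal.add_ne_top.2 ⟨hfin₁, hfin₂⟩) (lintegral_one_sub_cos_le ξ ε)
    _ = (ξ * ε) ^ 2 / 2 * fellerK ν ε + 2 * fellerG ν ε := by
        rw [ENNReal.toReal_add hfin₁ hfin₂, ENNReal.toReal_mul, ENNReal.toReal_mul,
          ENNReal.toReal_ofReal (by positivity), fellerK, fellerG, ENNReal.toReal_ofNat]
        field_simp

lemma fellerK_le_four_mul (hν : ∫⁻ x, ENNReal.ofReal (min (x ^ 2) 1) ∂ν < ∞)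
    {a b : ℝ} (ha : 0 < a) (hab : a ≤ b) (hb : b ≤ 2 * a) (hb1 : b ≤ 1) :
    fellerK ν a ≤ 4 * fellerK ν b := by
  have hm : (∫⁻ x in {x : ℝ | |x| ≤ a}, ENNReal.ofReal (x ^ 2) ∂ν).toReal ≤
      (∫⁻ x in {x : ℝ | |x| ≤ b}, ENNReal.ofReal (x ^ 2) ∂ν).toReal :=
    ENNReal.toReal_mono (lintegral_sq_abs_le_lt_top hν hb1).ne
      (lintegral_mono_set fun x hx => hx.out.trans hab)
  have hab' : (a ^ 2)⁻¹ ≤ 4 * (b ^ 2)⁻¹ :=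
    calc (a ^ 2)⁻¹ ≤ ((b / 2) ^ 2)⁻¹ :=
          inv_anti₀ (pow_pos (half_pos (ha.trans_le hab)) 2)
            (pow_le_pow_left₀ (half_pos (ha.trans_le hab)).le (by linarith) 2)
      _ = 4 * (b ^ 2)⁻¹ := by ring
  unfold fellerK
  calc _ ≤ (a ^ 2)⁻¹ * (∫⁻ x in {x : ℝ | |x| ≤ b}, ENNReal.ofReal (x ^ 2) ∂ν).toReal := by
        gcongr
    _ ≤ _ := by rw [← mul_assoc]; gcongr

lemma eventually_levyExponent_le_mul_fellerK_inv
    (hν : ∫⁻ x, ENNReal.ofReal (min (x ^ 2) 1) ∂ν < ∞) {M : ℝ}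
    (hGK : ∀ᶠ ε in 𝓝[>] 0, fellerG ν ε ≤ M * fellerK ν ε) :
    ∀ᶠ ξ in atTop, levyExponent ν ξ ≤ (1 / 2 + 2 * M) * fellerK ν ξ⁻¹ := by
  filter_upwards [tendsto_inv_atTop_nhdsGT_zero.eventually hGK, eventually_ge_atTop 1]
    with ξ hξ hξ1
  have hξ0 : ξ ≠ 0 := by positivity
  have := levyExponent_le hν (inv_pos.2 (by positivity)) (inv_le_one_of_one_le₀ hξ1) ξ
  rw [mul_inv_cancel₀ hξ0] at this
  linarith

lemma exists_levyExponent_doubling (hν : ∫⁻ x, ENNReal.ofReal (min (x ^ 2) 1) ∂ν < ∞)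
    (hKG : ∃ M : ℝ, ∀ᶠ ε in 𝓝[>] 0, fellerG ν ε / fellerK ν ε ≤ M) :
    ∃ c > 0, ∃ d ≥ 0, ∀ᶠ T in atTop, ∀ ξ ∈ Icc T (2 * T),
      levyExponent ν ξ ≤ c * levyExponent ν T + d := by
  -- Where `fellerK ν ε = 0`, the bound `G ε / K ε ≤ M` says nothing (division by zero).
  by_cases hK : ∃ ε ∈ Ioc (0 : ℝ) 1, fellerK ν ε = 0
  · obtain ⟨ε, ⟨hε, hε1⟩, hK0⟩ := hK
    refine ⟨1, one_pos, 2 * fellerG ν ε, by unfold fellerG; positivity,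
      .of_forall fun T ξ _ => ?_⟩
    have := levyExponent_le hν hε hε1 ξ
    rw [hK0, mul_zero, zero_add] at this
    linarith [levyExponent_nonneg ν T]
  push Not at hK
  obtain ⟨M, hM⟩ := hKG
  set C := 1 / 2 + 2 * max M 0
  have hC : 0 < C := by positivity
  have hGK : ∀ᶠ ε in 𝓝[>] 0, fellerG ν ε ≤ max M 0 * fellerK ν ε := by
    filter_upwards [hM, Ioo_mem_nhdsGT one_pos] with ε hε hε1
    have hKpos := (fellerK_nonneg ν ε).lt_of_ne' (hK ε ⟨hε1.1, hε1.2.le⟩)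
    exact (div_le_iff₀ hKpos).1 (hε.trans (le_max_left M 0))
  refine ⟨C * (2 * π ^ 2), mul_pos hC (by positivity), 0, le_rfl, ?_⟩
  filter_upwards [eventually_forall_ge_atTop.2 (eventually_levyExponent_le_mul_fellerK_inv hν hGK),
    eventually_ge_atTop 1] with T hT hT1 ξ ⟨hTξ, hξT⟩
  have hT0 : 0 < T := by positivity
  have hKξ : fellerK ν ξ⁻¹ ≤ 4 * fellerK ν T⁻¹ := by
    refine fellerK_le_four_mul hν (inv_pos.2 (hT0.trans_le hTξ)) (inv_anti₀ hT0 hTξ) ?_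
      (inv_le_one_of_one_le₀ hT1)
    rw [← div_eq_mul_inv, le_div_iff₀ (by linarith), inv_mul_le_iff₀ hT0]
    linarith
  have hKT := two_div_pi_sq_mul_fellerK_le_levyExponent hν T
  rw [abs_of_pos hT0] at hKT
  calc levyExponent ν ξ ≤ C * fellerK ν ξ⁻¹ := hT ξ hTξ
    _ ≤ C * (4 * fellerK ν T⁻¹) := by gcongr
    _ = C * (2 * π ^ 2) * (2 / π ^ 2 * fellerK ν T⁻¹) := by field_simp; ring
    _ ≤ C * (2 * π ^ 2) * levyExponent ν T + 0 := by rw [add_zero]; gcongr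

end LevyMeasure

theorem stmt_13_general (ν : Measure ℝ)
    (hνint : ∫⁻ x : ℝ, ENNReal.ofReal (min (x ^ 2) 1) ∂ν < ⊤)
    (ψ K G : ℝ → ℝ)
    (hψ : ∀ ξ : ℝ, ψ ξ = (∫⁻ x : ℝ, ENNReal.ofReal (1 - Real.cos (x * ξ)) ∂ν).toReal)
    (hK : ∀ ε : ℝ, K ε =
      (ε ^ 2)⁻¹ * (∫⁻ x in {x : ℝ | |x| ≤ ε}, ENNReal.ofReal (x ^ 2) ∂ν).toReal)
    (hG : ∀ ε : ℝ, G ε = (ν {x : ℝ | ε < |x|}).toReal)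
    (hKG : ∃ M : ℝ, ∀ᶠ ε in nhdsWithin (0 : ℝ) (Set.Ioi 0), G ε / K ε ≤ M)
    (hdalang : ∫⁻ ξ : ℝ, ENNReal.ofReal (1 / (1 + 2 * ψ ξ)) < ⊤) :
    Filter.Tendsto (fun ξ : ℝ => ψ ξ / |ξ|) (Filter.cocompact ℝ) Filter.atTop := by
  obtain rfl : ψ = levyExponent ν := funext hψ
  obtain rfl : K = fellerK ν := funext hK
  obtain rfl : G = fellerG ν := funext hG
  obtain ⟨c, hc, d, hd, hdoubling⟩ := exists_levyExponent_doubling hνint hKG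
  have hatTop : Tendsto (fun ξ => levyExponent ν ξ / |ξ|) atTop atTop := by
    have h := tendsto_div_atTop_of_lintegral_inv_lt_top (f := fun ξ => 2 * levyExponent ν ξ)
      (fun ξ => by have := levyExponent_nonneg ν ξ; positivity) hdalang.ne hc
      (by positivity : 0 ≤ 2 * d)
      (hdoubling.mono fun T hT ξ hξ => by linarith [hT ξ hξ])
    refine (h.atTop_div_const two_pos).congr' ?_
    filter_upwards [eventually_gt_atTop 0] with ξ hξ
    rw [abs_of_pos hξ]
    ring
  rw [cocompact_eq_atBot_atTop, tendsto_sup]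
  refine ⟨?_, hatTop⟩
  refine (hatTop.comp tendsto_neg_atBot_atTop).congr fun ξ => ?_
  simp only [Function.comp_apply, levyExponent_neg, abs_neg]

/-- for a Lévy measure `ν` with `ψ(ξ) = ∫ (1 − cos(xξ)) ν(dx)` and Feller
functions `K`, `G`, if `limsup_{ε→0+} G(ε)/K(ε) < ∞` and `∫ dξ/(1 + 2ψ(ξ)) < ∞`, then
`lim_{|ξ|→∞} ψ(ξ)/|ξ| = ∞`. -/
theorem stmt_13 (ν : Measure ℝ) (hν0 : ν {0} = 0)
    (hνint : ∫⁻ x : ℝ, ENNReal.ofReal (min (x ^ 2) 1) ∂ν < ⊤)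
    (ψ K G : ℝ → ℝ)
    (hψ : ∀ ξ : ℝ, ψ ξ = (∫⁻ x : ℝ, ENNReal.ofReal (1 - Real.cos (x * ξ)) ∂ν).toReal)
    (hK : ∀ ε : ℝ, K ε =
      (ε ^ 2)⁻¹ * (∫⁻ x in {x : ℝ | |x| ≤ ε}, ENNReal.ofReal (x ^ 2) ∂ν).toReal)
    (hG : ∀ ε : ℝ, G ε = (ν {x : ℝ | ε < |x|}).toReal)
    (hKG : ∃ M : ℝ, ∀ᶠ ε in nhdsWithin (0 : ℝ) (Set.Ioi 0), G ε / K ε ≤ M)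
    (hdalang : ∫⁻ ξ : ℝ, ENNReal.ofReal (1 / (1 + 2 * ψ ξ)) < ⊤) :
    Filter.Tendsto (fun ξ : ℝ => ψ ξ / |ξ|) (Filter.cocompact ℝ) Filter.atTop :=
  stmt_13_general ν hνint ψ K G hψ hK hG hKG hdalang
end

section
/- Let h : [0,∞) → [0,∞) be a measurable function such that ∫₀^∞ dz/(α + 2 h(z)) < ∞ for some α > 0. Then lim_{ξ→∞} ξ^{−2} ∫₀^ξ h(z) dz = ∞. -/
open MeasureTheory Set Filter
open scoped ENNReal Topology

/-!
Cauchy–Schwarz on the window `(ξ/2, ξ]` gives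
`(ξ/2)² ≤ ∫_{ξ/2}^{ξ} (α + 2h) · ∫_{ξ/2}^{ξ} 1/(α + 2h)`.
The second factor is a tail of a convergent integral, hence tends to `0`, so `∫_{ξ/2}^{ξ} h`
eventually exceeds every multiple of `ξ²`.
-/

theorem measure_univ_sq_le_lintegral_mul_lintegral {α : Type*} [MeasurableSpace α]
    {μ : Measure α} {f g : α → ℝ≥0∞} (hf : AEMeasurable f μ) (hg : AEMeasurable g μ)
    (hfg : ∀ᵐ x ∂μ, f x * g x = 1) :
    μ univ ^ 2 ≤ (∫⁻ x, f x ∂μ) * ∫⁻ x, g x ∂μ := by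
  have hsqrt : ∀ᵐ x ∂μ, f x ^ (2⁻¹ : ℝ) * g x ^ (2⁻¹ : ℝ) = 1 := by
    filter_upwards [hfg] with x hx
    rw [← ENNReal.mul_rpow_of_nonneg _ _ (by norm_num), hx, ENNReal.one_rpow]
  have holder := ENNReal.lintegral_mul_norm_pow_le hf hg (p := 2⁻¹) (q := 2⁻¹)
    (by norm_num) (by norm_num) (by norm_num)
  rw [lintegral_congr_ae hsqrt, lintegral_one] at holder
  have sq_sqrt (a : ℝ≥0∞) : (a ^ (2⁻¹ : ℝ)) ^ 2 = a := by
    rw [← ENNReal.rpow_two, ← ENNReal.rpow_mul]; norm_num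
  simpa only [mul_pow, sq_sqrt] using pow_le_pow_left' holder 2

theorem tendsto_setLIntegral_Ioi_atTop_zero {μ : Measure ℝ} {f : ℝ → ℝ≥0∞}
    (hf : ∫⁻ x, f x ∂μ ≠ ∞) :
    Tendsto (fun a => ∫⁻ x in Ioi a, f x ∂μ) atTop (𝓝 0) := by
  set ν := μ.withDensity f
  have hν (a : ℝ) : ν (Ioi a) = ∫⁻ x in Ioi a, f x ∂μ :=
    withDensity_apply f measurableSet_Ioi
  have hempty : ⋂ a : ℝ, Ioi a = ∅ := iInter_eq_empty_iff.2 fun x => ⟨x, lt_irrefl x⟩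
  have hfin : ν (Ioi 0) ≠ ∞ :=
    (hν 0).trans_ne (ne_top_of_le_ne_top hf (setLIntegral_le_lintegral _ _))
  have := tendsto_measure_iInter_atTop (μ := ν) (fun a => measurableSet_Ioi.nullMeasurableSet)
    (fun a b hab => Ioi_subset_Ioi hab) ⟨0, hfin⟩
  simpa only [hempty, measure_empty, Function.comp_def, hν] using this

theorem ENNReal.tendsto_nhds_top_of_one_le_add_mul {ι : Type*} {l : Filter ι}
    {c d x : ι → ℝ≥0∞} (hc : Tendsto c l (𝓝 0)) (hd : Tendsto d l (𝓝 0))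
    (h : ∀ᶠ i in l, 1 ≤ d i + c i * x i) : Tendsto x l (𝓝 ⊤) := by
  have hlow : Tendsto (fun i => (1 - d i) / c i) l (𝓝 ⊤) := by
    simpa using ENNReal.Tendsto.div
      (ENNReal.Tendsto.sub tendsto_const_nhds hd (Or.inl one_ne_top)) (by simp) hc
      (Or.inl zero_ne_top)
  exact tendsto_nhds_top_mono hlow
    (h.mono fun i hi => ENNReal.div_le_of_le_mul' (tsub_le_iff_left.2 hi))

theorem tendsto_setLIntegral_Ioc_half_atTop_zero {f : ℝ → ℝ≥0∞}
    (hf : ∫⁻ x in Ioi 0, f x ≠ ∞) :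
    Tendsto (fun ξ => ∫⁻ x in Ioc (ξ / 2) ξ, f x) atTop (𝓝 0) := by
  have htail := (tendsto_setLIntegral_Ioi_atTop_zero hf).comp
    (tendsto_id.atTop_div_const two_pos)
  refine tendsto_of_tendsto_of_tendsto_of_le_of_le' tendsto_const_nhds htail
    (Eventually.of_forall fun _ => zero_le) ?_
  filter_upwards [eventually_ge_atTop 0] with ξ hξ
  refine lintegral_mono' ?_ le_rfl
  rw [Measure.restrict_restrict measurableSet_Ioi]
  refine Measure.restrict_mono (fun z hz => ?_) le_rfl
  exact ⟨hz.1, lt_of_le_of_lt (by linarith) hz.1⟩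

theorem sq_measure_le_setLIntegral_mul_setLIntegral_inv {α : Type*} [MeasurableSpace α]
    {μ : Measure α} {φ : α → ℝ} (hφ : Measurable φ) {s : Set α} (hs : MeasurableSet s)
    (hpos : ∀ x ∈ s, 0 < φ x) :
    μ s ^ 2 ≤
      (∫⁻ x in s, ENNReal.ofReal (φ x) ∂μ) * ∫⁻ x in s, ENNReal.ofReal (φ x)⁻¹ ∂μ := by
  rw [← Measure.restrict_apply_univ]
  refine measure_univ_sq_le_lintegral_mul_lintegral (by fun_prop) (by fun_prop)
    ((ae_restrict_iff' hs).2 (ae_of_all _ fun x hx => ?_))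
  rw [← ENNReal.ofReal_mul (hpos x hx).le, mul_inv_cancel₀ (hpos x hx).ne', ENNReal.ofReal_one]

theorem ofReal_sq_le_setLIntegral_inv_mul_setLIntegral {h : ℝ → ℝ} (hmeas : Measurable h)
    (hnonneg : ∀ z ≥ (0 : ℝ), 0 ≤ h z) {α : ℝ} (hα : 0 < α) {ξ : ℝ} (hξ : 0 < ξ) :
    ENNReal.ofReal (ξ ^ 2) ≤ (∫⁻ z in Ioc (ξ / 2) ξ, ENNReal.ofReal (α + 2 * h z)⁻¹) *
      (ENNReal.ofReal (2 * α * ξ) + 8 * ∫⁻ z in Ioc 0 ξ, ENNReal.ofReal (h z)) := by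
  set J := Ioc (ξ / 2) ξ
  have hpos : ∀ z ∈ J, 0 < α + 2 * h z := fun z hz => by
    have := hnonneg z (by linarith [hz.1]); positivity
  have hCS := sq_measure_le_setLIntegral_mul_setLIntegral_inv (μ := volume) (by fun_prop)
    measurableSet_Ioc hpos
  have hF : ∫⁻ z in J, ENNReal.ofReal (α + 2 * h z) ≤
      ENNReal.ofReal (α * (ξ / 2)) + 2 * ∫⁻ z in Ioc 0 ξ, ENNReal.ofReal (h z) := calc
    _ ≤ ∫⁻ z in J, (ENNReal.ofReal α + 2 * ENNReal.ofReal (h z)) := by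
      refine lintegral_mono fun z => ENNReal.ofReal_add_le.trans_eq ?_
      rw [ENNReal.ofReal_mul zero_le_two, ENNReal.ofReal_ofNat]
    _ = ENNReal.ofReal (α * (ξ / 2)) + 2 * ∫⁻ z in J, ENNReal.ofReal (h z) := by
      rw [lintegral_add_left measurable_const, lintegral_const_mul _ hmeas.ennreal_ofReal,
        setLIntegral_const, Real.volume_Ioc, ← ENNReal.ofReal_mul hα.le]
      ring_nf
    _ ≤ _ := by gcongr; exact Ioc_subset_Ioc_left (by linarith)
  rw [Real.volume_Ioc] at hCS
  calc ENNReal.ofReal (ξ ^ 2) = 4 * ENNReal.ofReal (ξ - ξ / 2) ^ 2 := by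
        rw [← ENNReal.ofReal_pow (by linarith), ← ENNReal.ofReal_ofNat,
          ← ENNReal.ofReal_mul (by norm_num)]
        ring_nf
    _ ≤ 4 * ((ENNReal.ofReal (α * (ξ / 2)) + 2 * ∫⁻ z in Ioc 0 ξ, ENNReal.ofReal (h z)) *
        ∫⁻ z in J, ENNReal.ofReal (α + 2 * h z)⁻¹) := by gcongr; exact hCS.trans (by gcongr)
    _ = _ := by
      rw [show ENNReal.ofReal (2 * α * ξ) = 4 * ENNReal.ofReal (α * (ξ / 2)) by
        rw [← ENNReal.ofReal_ofNat, ← ENNReal.ofReal_mul (by norm_num)]; ring_nf]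
      ring

/-- if `h : [0,∞) → [0,∞)` is measurable and `∫₀^∞ dz/(α + 2 h(z)) < ∞` for
some `α > 0`, then `lim_{ξ→∞} ξ^{−2} ∫₀^ξ h(z) dz = ∞`. -/
theorem stmt_16 (h : ℝ → ℝ) (hmeas : Measurable h) (hnonneg : ∀ z ≥ (0 : ℝ), 0 ≤ h z)
    (α : ℝ) (hα : 0 < α)
    (hint : ∫⁻ z in Set.Ioi (0 : ℝ), ENNReal.ofReal (1 / (α + 2 * h z)) < ⊤) :
    Filter.Tendsto
      (fun ξ : ℝ => (∫⁻ z in Set.Ioc (0 : ℝ) ξ, ENNReal.ofReal (h z)) / ENNReal.ofReal (ξ ^ 2))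
      Filter.atTop (nhds ⊤) := by
  set H := fun ξ : ℝ => ∫⁻ z in Ioc (0 : ℝ) ξ, ENNReal.ofReal (h z)
  set c := fun ξ : ℝ => ∫⁻ z in Ioc (ξ / 2) ξ, ENNReal.ofReal (α + 2 * h z)⁻¹
  have hc : Tendsto c atTop (𝓝 0) :=
    tendsto_setLIntegral_Ioc_half_atTop_zero (by simpa only [one_div] using hint.ne)
  have hd : Tendsto (fun ξ => c ξ * ENNReal.ofReal (2 * α / ξ)) atTop (𝓝 0) := by
    have : Tendsto (fun ξ : ℝ => ENNReal.ofReal (2 * α / ξ)) atTop (𝓝 0) := by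
      simpa using ENNReal.tendsto_ofReal (tendsto_const_nhds.div_atTop tendsto_id (a := 2 * α))
    simpa using
      ENNReal.Tendsto.mul hc (Or.inr ENNReal.zero_ne_top) this (Or.inr ENNReal.zero_ne_top)
  refine ENNReal.tendsto_nhds_top_of_one_le_add_mul (c := fun ξ => 8 * c ξ)
    (by simpa using ENNReal.Tendsto.const_mul hc (Or.inr ENNReal.ofNat_ne_top)) hd ?_
  filter_upwards [eventually_gt_atTop 0] with ξ hξ
  have hξ2 : ENNReal.ofReal (ξ ^ 2) ≠ 0 := (ENNReal.ofReal_pos.2 (by positivity)).ne'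
  calc 1 = ENNReal.ofReal (ξ ^ 2) / ENNReal.ofReal (ξ ^ 2) :=
        (ENNReal.div_self hξ2 ENNReal.ofReal_ne_top).symm
    _ ≤ c ξ * (ENNReal.ofReal (2 * α * ξ) + 8 * H ξ) / ENNReal.ofReal (ξ ^ 2) := by
        gcongr; exact ofReal_sq_le_setLIntegral_inv_mul_setLIntegral hmeas hnonneg hα hξ
    _ = _ := by
        rw [mul_add, ENNReal.add_div, ← mul_assoc, mul_comm (c ξ) 8, mul_div_assoc,
          mul_div_assoc, ← ENNReal.ofReal_div_of_pos (by positivity)]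
        congr 3
        field_simp
end

section
/- Let ν be a Borel measure on ℝ with ν({0}) = 0 and ∫ min(x², 1) ν(dx) < ∞, and define ψ(ξ) := ∫_ℝ (1 − cos(xξ)) ν(dx). Then there exists a constant C > 0 (independent of ν) such that for every ξ > 0: ψ(ξ) ≤ C · ξ^{−1} ∫₀^ξ ψ(z) dz. -/
open MeasureTheory Set Filter
open scoped ENNReal

/-!
Integrating the elementary inequality `1 - cos θ ≤ 6 (1 - sinc θ)` against `ν` at `θ = x ξ` gives
the claim with `C = 6`, because by Tonelli `ξ⁻¹ ∫₀^ξ ψ(z) dz = ∫ (1 - sinc (x ξ)) ν(dx)`.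
The integrability of `min (x², 1)` together with `ν {0} = 0` makes `ν` σ-finite, so Tonelli applies,
and it also makes every quantity finite, so the inequality survives the passage to real numbers.
-/

lemma le_of_hasDerivAt_le_of_nonneg {f g f' g' : ℝ → ℝ} (hf : ∀ x, HasDerivAt f (f' x) x)
    (hg : ∀ x, HasDerivAt g (g' x) x) (h₀ : f 0 ≤ g 0) (hd : ∀ x, 0 ≤ x → f' x ≤ g' x)
    {x : ℝ} (hx : 0 ≤ x) : f x ≤ g x := by
  have hmono : MonotoneOn (g - f) (Ici 0) :=
    monotoneOn_of_hasDerivWithinAt_nonneg (convex_Ici 0)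
      (((continuous_iff_continuousAt.2 fun x ↦ (hg x).continuousAt).sub
        (continuous_iff_continuousAt.2 fun x ↦ (hf x).continuousAt)).continuousOn)
      (fun x _ ↦ ((hg x).sub (hf x)).hasDerivWithinAt)
      (fun x hx ↦ sub_nonneg.2 (hd x (interior_subset hx)))
  have := hmono self_mem_Ici hx hx
  simp only [Pi.sub_apply] at this
  linarith

namespace Real

lemma cos_le_one_sub_sq_div_two_add_pow_four_div {x : ℝ} (hx : 0 ≤ x) :
    cos x ≤ 1 - x ^ 2 / 2 + x ^ 4 / 24 := by
  refine le_of_hasDerivAt_le_of_nonneg (g := fun x ↦ 1 - x ^ 2 / 2 + x ^ 4 / 24)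
    (g' := fun x ↦ -x + x ^ 3 / 6) hasDerivAt_cos (fun x ↦ ?_) (by norm_num)
    (fun x hx ↦ by linarith [sin_ge_sub_cube hx]) hx
  exact ((((hasDerivAt_pow 2 x).div_const 2).const_sub 1).add
    ((hasDerivAt_pow 4 x).div_const 24)).congr_deriv (by push_cast; ring)

lemma sin_le_sub_pow_three_div_add_pow_five_div {x : ℝ} (hx : 0 ≤ x) :
    sin x ≤ x - x ^ 3 / 6 + x ^ 5 / 120 := by
  refine le_of_hasDerivAt_le_of_nonneg (g := fun x ↦ x - x ^ 3 / 6 + x ^ 5 / 120)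
    (g' := fun x ↦ 1 - x ^ 2 / 2 + x ^ 4 / 24) hasDerivAt_sin (fun x ↦ ?_) (by norm_num)
    (fun x hx ↦ cos_le_one_sub_sq_div_two_add_pow_four_div hx) hx
  exact (((hasDerivAt_id x).sub ((hasDerivAt_pow 3 x).div_const 6)).add
    ((hasDerivAt_pow 5 x).div_const 120)).congr_deriv (by push_cast; ring)

lemma sinc_le_one_sub_sq_div_six_add_pow_four_div {x : ℝ} (hx : 0 ≤ x) :
    sinc x ≤ 1 - x ^ 2 / 6 + x ^ 4 / 120 := by
  rcases hx.eq_or_lt with rfl | hx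
  · simp
  rw [sinc_of_ne_zero hx.ne', div_le_iff₀ hx]
  linarith [sin_le_sub_pow_three_div_add_pow_five_div hx.le]

/-- For small `x` both sides are of order `x ^ 2`; for `|x| ≥ 2`, `sinc x ≤ 1 / 2`. -/
theorem one_sub_cos_le_six_mul_one_sub_sinc (x : ℝ) : 1 - cos x ≤ 6 * (1 - sinc x) := by
  wlog hx : 0 ≤ x generalizing x
  · simpa using this (-x) (by linarith)
  rcases le_or_gt x 2 with hx2 | hx2
  · have h4 : 0 ≤ x ^ 2 * (4 - x ^ 2) := mul_nonneg (sq_nonneg x) (by nlinarith)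
    nlinarith [sinc_le_one_sub_sq_div_six_add_pow_four_div hx, one_sub_sq_div_two_le_cos (x := x)]
  · have : sinc x ≤ 1 / 2 := by
      refine (sinc_le_inv_abs (by positivity)).trans ?_
      rw [abs_of_pos (by positivity)]
      exact inv_le_of_inv_le₀ (by norm_num) (by linarith)
    linarith [neg_one_le_cos x]

end Real

open Real

/-- `μ` is recovered from the finite measure `μ.withDensity f` as its density-`f⁻¹` measure. -/
lemma MeasureTheory.sigmaFinite_of_lintegral_ne_top {α : Type*} [MeasurableSpace α]
    {μ : Measure α} {f : α → ℝ≥0∞} (hf : Measurable f)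
    (hf₀ : ∀ᵐ x ∂μ, f x ≠ 0) (hfin : ∫⁻ x, f x ∂μ ≠ ∞) : SigmaFinite μ := by
  have : IsFiniteMeasure (μ.withDensity f) := isFiniteMeasure_withDensity hfin
  have hinv : ∀ᵐ x ∂μ.withDensity f, (f x)⁻¹ ≠ ∞ :=
    (withDensity_absolutelyContinuous μ f).ae_le (hf₀.mono fun x hx ↦ ENNReal.inv_ne_top.2 hx)
  rw [← withDensity_inv_same hf hf₀ ((ae_lt_top hf hfin).mono fun x hx ↦ hx.ne)]
  exact SigmaFinite.withDensity_of_ne_top hinv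

lemma integral_Ioc_one_sub_cos_mul (x : ℝ) {ξ : ℝ} (hξ : 0 ≤ ξ) :
    ∫ z in Ioc 0 ξ, (1 - cos (x * z)) = ξ * (1 - sinc (x * ξ)) := by
  rcases eq_or_ne x 0 with rfl | hx
  · simp
  rw [← intervalIntegral.integral_of_le hξ, intervalIntegral.integral_sub intervalIntegrable_const
    ((by fun_prop : Continuous fun z ↦ cos (x * z)).intervalIntegrable _ _),
    intervalIntegral.integral_comp_mul_left (fun u ↦ cos u) hx, integral_cos]
  rcases eq_or_ne ξ 0 with rfl | hξ₀
  · simp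
  rw [sinc_of_ne_zero (mul_ne_zero hx hξ₀)]
  simp only [smul_eq_mul, sin_zero, mul_zero, sub_zero, intervalIntegral.integral_const]
  field_simp

lemma lintegral_Ioc_ofReal_one_sub_cos_mul (x : ℝ) {ξ : ℝ} (hξ : 0 ≤ ξ) :
    ∫⁻ z in Ioc 0 ξ, ENNReal.ofReal (1 - cos (x * z)) =
      ENNReal.ofReal (ξ * (1 - sinc (x * ξ))) := by
  rw [← integral_Ioc_one_sub_cos_mul x hξ, ofReal_integral_eq_lintegral_ofReal
    (by fun_prop : Continuous fun z ↦ 1 - cos (x * z)).integrableOn_Ioc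
    (ae_of_all _ fun z ↦ sub_nonneg.2 (cos_le_one _))]

lemma one_sub_cos_mul_le (x z : ℝ) : 1 - cos (x * z) ≤ max (z ^ 2) 2 * min (x ^ 2) 1 := by
  rcases le_or_gt (x ^ 2) 1 with hx | hx
  · rw [min_eq_left hx]
    nlinarith [one_sub_sq_div_two_le_cos (x := x * z), le_max_left (z ^ 2) 2, sq_nonneg x,
      sq_nonneg z]
  · rw [min_eq_right hx.le, mul_one]
    linarith [neg_one_le_cos (x * z), le_max_right (z ^ 2) 2]

noncomputable def realCharExponent (ν : Measure ℝ) (ξ : ℝ) : ℝ≥0∞ :=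
  ∫⁻ x, ENNReal.ofReal (1 - cos (x * ξ)) ∂ν

namespace realCharExponent

variable (ν : Measure ℝ)

lemma measurable [SFinite ν] : Measurable (realCharExponent ν) :=
  Measurable.lintegral_prod_right (f := fun z x ↦ ENNReal.ofReal (1 - cos (x * z))) (by fun_prop)

lemma le_mul_lintegral (z : ℝ) :
    realCharExponent ν z ≤
      ENNReal.ofReal (max (z ^ 2) 2) * ∫⁻ x, ENNReal.ofReal (min (x ^ 2) 1) ∂ν := by
  rw [← lintegral_const_mul' _ _ ENNReal.ofReal_ne_top]
  refine lintegral_mono fun x ↦ ?_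
  rw [← ENNReal.ofReal_mul (by positivity)]
  exact ENNReal.ofReal_le_ofReal (one_sub_cos_mul_le x z)

lemma lintegral_Ioc_lt_top (hν : ∫⁻ x, ENNReal.ofReal (min (x ^ 2) 1) ∂ν < ∞) (ξ : ℝ) :
    ∫⁻ z in Ioc 0 ξ, realCharExponent ν z < ∞ := by
  have hbound : ∀ z ∈ Ioc 0 ξ, realCharExponent ν z ≤
      ENNReal.ofReal (max (ξ ^ 2) 2) * ∫⁻ x, ENNReal.ofReal (min (x ^ 2) 1) ∂ν := fun z hz ↦
    (le_mul_lintegral ν z).trans (by gcongr; exacts [hz.1.le, hz.2])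
  refine (setLIntegral_mono measurable_const hbound).trans_lt ?_
  rw [setLIntegral_const, Real.volume_Ioc]
  exact ENNReal.mul_lt_top (ENNReal.mul_lt_top ENNReal.ofReal_lt_top hν) ENNReal.ofReal_lt_top

lemma lintegral_Ioc [SFinite ν] {ξ : ℝ} (hξ : 0 ≤ ξ) :
    ∫⁻ z in Ioc 0 ξ, realCharExponent ν z = ∫⁻ x, ENNReal.ofReal (ξ * (1 - sinc (x * ξ))) ∂ν := by
  unfold realCharExponent
  rw [lintegral_lintegral_swap (by fun_prop)]
  simp_rw [lintegral_Ioc_ofReal_one_sub_cos_mul _ hξ]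

theorem le_mul_lintegral_Ioc [SFinite ν] {ξ : ℝ} (hξ : 0 < ξ) :
    realCharExponent ν ξ ≤ ENNReal.ofReal (6 / ξ) * ∫⁻ z in Ioc 0 ξ, realCharExponent ν z := by
  rw [lintegral_Ioc ν hξ.le, ← lintegral_const_mul' _ _ ENNReal.ofReal_ne_top]
  refine lintegral_mono fun x ↦ ?_
  rw [← ENNReal.ofReal_mul (by positivity), ← mul_assoc, div_mul_cancel₀ _ hξ.ne']
  exact ENNReal.ofReal_le_ofReal (one_sub_cos_le_six_mul_one_sub_sinc _)

end realCharExponent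

/-- there is a universal constant `C > 0` (independent of the Lévy measure `ν`)
such that `ψ(ξ) ≤ C · ξ⁻¹ ∫₀^ξ ψ(z) dz` for all `ξ > 0`, where
`ψ(ξ) = ∫ (1 − cos(xξ)) ν(dx)`. -/
theorem stmt_18 : ∃ C > (0 : ℝ), ∀ (ν : Measure ℝ), ν {0} = 0 →
    (∫⁻ x : ℝ, ENNReal.ofReal (min (x ^ 2) 1) ∂ν) < ⊤ →
    ∀ ξ > (0 : ℝ),
      (∫⁻ x : ℝ, ENNReal.ofReal (1 - Real.cos (x * ξ)) ∂ν).toReal ≤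
        C * (ξ⁻¹ * ∫ z in Set.Ioc (0 : ℝ) ξ,
          (∫⁻ x : ℝ, ENNReal.ofReal (1 - Real.cos (x * z)) ∂ν).toReal) := by
  refine ⟨6, by norm_num, fun ν h0 hν ξ hξ ↦ ?_⟩
  have hpos : ∀ᵐ x ∂ν, ENNReal.ofReal (min (x ^ 2) 1) ≠ 0 :=
    (measure_eq_zero_iff_ae_notMem.1 h0).mono fun x hx ↦ by
      have : x ≠ 0 := hx
      exact (ENNReal.ofReal_pos.2 (lt_min (by positivity) one_pos)).ne'
  have : SigmaFinite ν := sigmaFinite_of_lintegral_ne_top (by fun_prop) hpos hν.ne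
  have hL := realCharExponent.lintegral_Ioc_lt_top ν hν ξ
  change (realCharExponent ν ξ).toReal ≤
    6 * (ξ⁻¹ * ∫ z in Ioc 0 ξ, (realCharExponent ν z).toReal)
  rw [integral_toReal (realCharExponent.measurable ν).aemeasurable
    (ae_lt_top (realCharExponent.measurable ν) hL.ne)]
  calc (realCharExponent ν ξ).toReal
      ≤ (ENNReal.ofReal (6 / ξ) * ∫⁻ z in Ioc 0 ξ, realCharExponent ν z).toReal :=
        ENNReal.toReal_mono (ENNReal.mul_ne_top ENNReal.ofReal_ne_top hL.ne)
          (realCharExponent.le_mul_lintegral_Ioc ν hξ)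
    _ = 6 * (ξ⁻¹ * (∫⁻ z in Ioc 0 ξ, realCharExponent ν z).toReal) := by
        rw [ENNReal.toReal_mul, ENNReal.toReal_ofReal (by positivity)]
        ring
end
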